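/- arXiv:1007.1076 — 2 statements merged into one kernel-verified Lean document; each statement's English description precedes it below -/
import Mathlib

section
/- Let k be a field of characteristic 0, μ ∈ k, and Φ = Σ_W Z_W·W ∈ k⟪X₀,X₁⟫ with Z_∅ = 1. Then the hexagon relation e^{(μ/2)X₀}·Φ(X_∞,X₀)·e^{(μ/2)X_∞}·Φ(X₁,X_∞)·e^{(μ/2)X₁}·Φ(X₀,X₁) = 1 (with X_∞ = −X₀−X₁) holds in k⟪X₀,X₁⟫ if and only if for every nonempty word W in {X₀,X₁}: Σ over all factorizations W = W₁W₂W₃W₄W₅W₆ into six (possibly empty) words of the product [μ^{|W₁|}/(2^{|W₁|}·|W₁|!) if W₁ is a (possibly empty) power of X₀, else 0] · [Σ_{(𝐔,𝐤)∈dec(W₂,X₀)} (−1)^{|𝐔|} Z_{X₀^{|U₁|}X₁^{k₁}⋯X₀^{|U_p|}X₁^{k_p}}] · [(−1)^{|W₃|}·μ^{|W₃|}/(2^{|W₃|}·|W₃|!)] · [Σ_{(𝐕,𝐥)∈dec(W₄,X₁)} (−1)^{|𝐕|} Z_{X₁^{|V₁|}X₀^{l₁}⋯X₁^{|V_q|}X₀^{l_q}}]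 · [μ^{|W₅|}/(2^{|W₅|}·|W₅|!) if W₅ is a (possibly empty) power of X₁, else 0] · Z_{W₆} equals 0. -/
open scoped BigOperators

/-- Words in the alphabet `{X₀, X₁}`: `false` stands for `X₀`, `true` for `X₁`. -/
abbrev Word := List Bool

/-- The involution `θ` exchanging the letters `X₀` and `X₁`. -/
def theta (W : Word) : Word := W.map (fun b => !b)

/-- The depth of a word: its number of occurrences of `X₁`. -/
def depth (W : Word) : ℕ := W.count true

/-- The coefficientwise unit of the noncommutative power series algebra. -/
def deltaOne {α : Type*} {k : Type*} [Semiring k] : List α → k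
  | [] => 1
  | _ :: _ => 0

/-- Convolution product: `(F·G)_W = Σ_{U₁U₂ = W} F_{U₁} G_{U₂}`, the sum running over all
factorizations of `W` as a concatenation of two (possibly empty) words. -/
def conv {α : Type*} {k : Type*} [Semiring k] (F G : List α → k) (W : List α) : k :=
  ∑ i ∈ Finset.range (W.length + 1), F (W.take i) * G (W.drop i)

/-- Convolution of a list of series: the coefficient of `W` in the product, i.e. the sum
over all factorizations of `W` into as many (possibly empty) factors of the products of
the corresponding coefficients. -/
def convL {α : Type*} {k : Type*} [Semiring k] : List (List α → k) → List α → k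
  | [], W => deltaOne W
  | F :: Fs, W => ∑ i ∈ Finset.range (W.length + 1), F (W.take i) * convL Fs (W.drop i)

/-- Coefficient of the word `W` in `Φ(A,B)`, the degree-preserving substitution `X₀ ↦ A`,
`X₁ ↦ B` applied to `Φ = Σ_V Z_V·V`, where the degree-one elements `A = s false`,
`B = s true` are recorded by their coefficients `s : Bool → α → k` on the letters of the
target alphabet. -/
def subCoeff {α : Type*} {k : Type*} [CommSemiring k] (s : Bool → α → k) (Z : Word → k)
    (W : List α) : k :=
  ∑ v : Fin W.length → Bool, Z (List.ofFn v) * ∏ j : Fin W.length, s (v j) (W.get j)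

/-- `IsDec i W L` says that the list `L = [(V₁,k₁),…,(V_p,k_p)]` is a decomposition
`W = V₁ X_i^{k₁} V₂ X_i^{k₂} ⋯ V_p X_i^{k_p}` with `p ≥ 1`, `V₂,…,V_p` nonempty,
`k₁,…,k_{p−1} > 0` and `k_p ≥ 0`; this is the set `dec(W, X_i)`. -/
def IsDec (i : Bool) (W : Word) (L : List (Word × ℕ)) : Prop :=
  L ≠ [] ∧
  (∀ j : Fin L.length, 0 < (j : ℕ) → (L.get j).1 ≠ []) ∧
  (∀ j : Fin L.length, (j : ℕ) + 1 < L.length → 0 < (L.get j).2) ∧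
  W = (L.map (fun p => p.1 ++ List.replicate p.2 i)).flatten

/-- The word `X_i^{|V₁|} X_{1−i}^{k₁} ⋯ X_i^{|V_p|} X_{1−i}^{k_p}` associated to a
decomposition `L = [(V₁,k₁),…,(V_p,k_p)] ∈ dec(W, X_i)`. -/
def decWord (i : Bool) (L : List (Word × ℕ)) : Word :=
  (L.map (fun p => List.replicate p.1.length i ++ List.replicate p.2 (!i))).flatten

/-- `|𝐕| = |V₁| + ⋯ + |V_p|` for a decomposition `L = [(V₁,k₁),…,(V_p,k_p)]`. -/
def vlen (L : List (Word × ℕ)) : ℕ := (L.map (fun p => p.1.length)).sum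

/-- Coefficients of the `n`-th power of a series. -/
def powC {k : Type*} [Semiring k] (F : Word → k) : ℕ → Word → k
  | 0 => deltaOne
  | n + 1 => conv F (powC F n)

/-- Coefficients of the exponential `e^F = Σ_n F^n/n!` of a series `F` with zero constant
term (for such an `F` only the powers `F^n` with `n ≤ |W|` contribute to the coefficient
of `W`). -/
noncomputable def expC {k : Type*} [Field k] (F : Word → k) (W : Word) : k :=
  ∑ n ∈ Finset.range (W.length + 1), ((n.factorial : k))⁻¹ * powC F n W

/-- Coefficients of the substitution `X₀ ↦ X_∞ = −X₀−X₁`, `X₁ ↦ X₀`, used for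
`Φ(X_∞, X₀)`. -/
def sInf0 {k : Type*} [Ring k] : Bool → Bool → k
  | false, _ => -1
  | true, b => if b then 0 else 1

/-- Coefficients of the substitution `X₀ ↦ X₁`, `X₁ ↦ X_∞ = −X₀−X₁`, used for
`Φ(X₁, X_∞)`. -/
def s1Inf {k : Type*} [Ring k] : Bool → Bool → k
  | false, b => if b then 1 else 0
  | true, _ => -1

/-- The series `(μ/2)·X₀`. -/
def halfX0 {k : Type*} [Field k] (μ : k) : Word → k :=
  fun W => if W = [false] then μ / 2 else 0

/-- The series `(μ/2)·X₁`. -/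
def halfX1 {k : Type*} [Field k] (μ : k) : Word → k :=
  fun W => if W = [true] then μ / 2 else 0

/-- The series `(μ/2)·X_∞ = (μ/2)·(−X₀−X₁)`. -/
def halfXinf {k : Type*} [Field k] (μ : k) : Word → k :=
  fun W => if W = [false] ∨ W = [true] then -(μ / 2) else 0

/-- Closed form of the coefficients of `e^{(μ/2)X₀}`: `μ^{|W|}/(2^{|W|}|W|!)` when `W` is
a (possibly empty) power of `X₀`, and `0` otherwise. -/
noncomputable def hexA {k : Type*} [Field k] (μ : k) : Word → k := fun W =>
  if W = List.replicate W.length false then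
    μ ^ W.length / ((2 : k) ^ W.length * (W.length.factorial : k)) else 0

/-- Closed form of the coefficients of `Φ(X_∞, X₀)`:
`Σ_{(𝐔,𝐤) ∈ dec(W,X₀)} (−1)^{|𝐔|} Z_{X₀^{|U₁|}X₁^{k₁}⋯X₀^{|U_p|}X₁^{k_p}}`. -/
noncomputable def hexB {k : Type*} [Field k] (Z : Word → k) : Word → k := fun W =>
  ∑ᶠ L ∈ {L : List (Word × ℕ) | IsDec false W L},
    (-1 : k) ^ vlen L * Z (decWord false L)

/-- Closed form of the coefficients of `e^{(μ/2)X_∞}`: `(−1)^{|W|}μ^{|W|}/(2^{|W|}|W|!)`. -/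
noncomputable def hexC {k : Type*} [Field k] (μ : k) : Word → k := fun W =>
  (-1 : k) ^ W.length * μ ^ W.length / ((2 : k) ^ W.length * (W.length.factorial : k))

/-- Closed form of the coefficients of `Φ(X₁, X_∞)`:
`Σ_{(𝐕,𝐥) ∈ dec(W,X₁)} (−1)^{|𝐕|} Z_{X₁^{|V₁|}X₀^{l₁}⋯X₁^{|V_q|}X₀^{l_q}}`. -/
noncomputable def hexD {k : Type*} [Field k] (Z : Word → k) : Word → k := fun W =>
  ∑ᶠ L ∈ {L : List (Word × ℕ) | IsDec true W L},
    (-1 : k) ^ vlen L * Z (decWord true L)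

/-- Closed form of the coefficients of `e^{(μ/2)X₁}`: `μ^{|W|}/(2^{|W|}|W|!)` when `W` is
a (possibly empty) power of `X₁`, and `0` otherwise. -/
noncomputable def hexE {k : Type*} [Field k] (μ : k) : Word → k := fun W =>
  if W = List.replicate W.length true then
    μ ^ W.length / ((2 : k) ^ W.length * (W.length.factorial : k)) else 0

section StepA
variable {k : Type*} [Field k] [CharZero k]

lemma conv_letter (F G : Word → k) (hF0 : F [] = 0)
    (hF2 : ∀ V : Word, 2 ≤ V.length → F V = 0) (b : Bool) (T : Word) :
    conv F G (b :: T) = F [b] * G T := by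
  unfold conv
  rw [Finset.sum_eq_single 1]
  · simp
  · intro n hn hne
    simp only [Finset.mem_range, List.length_cons] at hn
    rcases Nat.lt_or_ge n 2 with h | h
    · interval_cases n
      · simp [hF0]
      · exact absurd rfl hne
    · rw [hF2 _ (by rw [List.length_take, List.length_cons]; omega), zero_mul]
  · intro h; simp at h

lemma powC_halfX0 (μ : k) : ∀ n (W : Word),
    powC (halfX0 μ) n W = if W = List.replicate n false then (μ/2)^n else 0 := by
  intro n
  induction n with
  | zero => intro W; cases W <;> simp [powC, deltaOne]
  | succ n ih =>
    intro W
    cases W with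
    | nil =>
      simp [powC, conv, halfX0, List.replicate_succ]
    | cons b T =>
      rw [powC, conv_letter _ _ (by simp [halfX0])
        (fun V hV => by
          simp only [halfX0]
          rw [if_neg]; rintro rfl; simp at hV), ih]
      cases b <;> simp [halfX0, List.replicate_succ, pow_succ, mul_comm]

lemma powC_halfX1 (μ : k) : ∀ n (W : Word),
    powC (halfX1 μ) n W = if W = List.replicate n true then (μ/2)^n else 0 := by
  intro n
  induction n with
  | zero => intro W; cases W <;> simp [powC, deltaOne]
  | succ n ih =>
    intro W
    cases W with
    | nil =>
      simp [powC, conv, halfX1, List.replicate_succ]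
    | cons b T =>
      rw [powC, conv_letter _ _ (by simp [halfX1])
        (fun V hV => by
          simp only [halfX1]
          rw [if_neg]; rintro rfl; simp at hV), ih]
      cases b <;> simp [halfX1, List.replicate_succ, pow_succ, mul_comm]

lemma powC_halfXinf (μ : k) : ∀ n (W : Word),
    powC (halfXinf μ) n W = if W.length = n then (-(μ/2))^n else 0 := by
  intro n
  induction n with
  | zero => intro W; cases W <;> simp [powC, deltaOne]
  | succ n ih =>
    intro W
    cases W with
    | nil => simp [powC, conv, halfXinf]
    | cons b T =>
      rw [powC, conv_letter _ _ (by simp [halfXinf])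
        (fun V hV => by
          simp only [halfXinf]
          rw [if_neg]; rintro (rfl|rfl) <;> simp at hV), ih]
      have : halfXinf μ [b] = -(μ/2) := by cases b <;> simp [halfXinf]
      rw [this]
      by_cases h : T.length = n
      · simp [h, pow_succ, mul_comm]
      · simp [h]

lemma expC_halfX0 (μ : k) : expC (halfX0 μ) = hexA μ := by
  funext W
  unfold expC hexA
  by_cases h : W = List.replicate W.length false
  · rw [if_pos h, Finset.sum_eq_single W.length]
    · rw [powC_halfX0, if_pos h, div_pow]
      have h2 : (2:k)^W.length ≠ 0 := pow_ne_zero _ two_ne_zero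
      have hf : (W.length.factorial : k) ≠ 0 := Nat.cast_ne_zero.mpr W.length.factorial_ne_zero
      field_simp
    · intro n hn hne
      rw [powC_halfX0, if_neg, mul_zero]
      intro hW; exact hne (by rw [hW, List.length_replicate])
    · intro h'; exact absurd (Finset.mem_range.mpr (by omega)) h'
  · rw [if_neg h]
    apply Finset.sum_eq_zero
    intro n hn
    rw [powC_halfX0, if_neg, mul_zero]
    intro hW; exact h (by rw [hW]; simp)

lemma expC_halfX1 (μ : k) : expC (halfX1 μ) = hexE μ := by
  funext W
  unfold expC hexE
  by_cases h : W = List.replicate W.length true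
  · rw [if_pos h, Finset.sum_eq_single W.length]
    · rw [powC_halfX1, if_pos h, div_pow]
      have h2 : (2:k)^W.length ≠ 0 := pow_ne_zero _ two_ne_zero
      have hf : (W.length.factorial : k) ≠ 0 := Nat.cast_ne_zero.mpr W.length.factorial_ne_zero
      field_simp
    · intro n hn hne
      rw [powC_halfX1, if_neg, mul_zero]
      intro hW; exact hne (by rw [hW, List.length_replicate])
    · intro h'; exact absurd (Finset.mem_range.mpr (by omega)) h'
  · rw [if_neg h]
    apply Finset.sum_eq_zero
    intro n hn
    rw [powC_halfX1, if_neg, mul_zero]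
    intro hW; exact h (by rw [hW]; simp)

lemma expC_halfXinf (μ : k) : expC (halfXinf μ) = hexC μ := by
  funext W
  unfold expC hexC
  rw [Finset.sum_eq_single W.length]
  · rw [powC_halfXinf, if_pos rfl, neg_pow, div_pow]
    have h2 : (2:k)^W.length ≠ 0 := pow_ne_zero _ two_ne_zero
    have hf : (W.length.factorial : k) ≠ 0 := Nat.cast_ne_zero.mpr W.length.factorial_ne_zero
    field_simp
  · intro n hn hne
    rw [powC_halfXinf, if_neg (fun hW => hne hW.symm), mul_zero]
  · intro h'; exact absurd (Finset.mem_range.mpr (by omega)) h'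
end StepA

def DecAux (i : Bool) : Word → List (Word × ℕ) → Prop
  | _, [] => False
  | W, [(V, kk)] => W = V ++ List.replicate kk i
  | W, (V, kk) :: q :: L => 0 < kk ∧ q.1 ≠ [] ∧
      ∃ W', W = V ++ List.replicate kk i ++ W' ∧ DecAux i W' (q :: L)

lemma isDec_iff_decAux (i : Bool) : ∀ (L : List (Word × ℕ)) (W : Word),
    IsDec i W L ↔ DecAux i W L := by
  intro L
  induction L with
  | nil => intro W; simp [IsDec, DecAux]
  | cons p L ih =>
    intro W
    obtain ⟨V, kk⟩ := p
    cases L with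
    | nil =>
      constructor
      · rintro ⟨-, -, -, h4⟩
        simpa [DecAux] using h4
      · intro h
        refine ⟨by simp, ?_, ?_, by simpa [DecAux] using h⟩
        · intro j hj
          have := j.isLt
          simp only [List.length_cons, List.length_nil] at this
          omega
        · intro j hj
          simp only [List.length_cons, List.length_nil] at hj
          omega
    | cons q L' =>
      constructor
      · rintro ⟨-, h2, h3, h4⟩
        refine ⟨h3 ⟨0, by simp⟩ (by simp), h2 ⟨1, by simp⟩ (by norm_num), ?_⟩
        refine ⟨((q :: L').map (fun p => p.1 ++ List.replicate p.2 i)).flatten, ?_, ?_⟩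
        · simpa using h4
        · rw [← ih]
          refine ⟨by simp, ?_, ?_, rfl⟩
          · intro j hj
            have := h2 j.succ (by simp)
            simpa using this
          · intro j hj
            have := h3 j.succ (by simpa using Nat.succ_lt_succ hj)
            simpa using this
      · rintro ⟨hk, hq, W', hW, hD⟩
        obtain ⟨-, g2, g3, g4⟩ := (ih W').mpr hD
        refine ⟨by simp, ?_, ?_, ?_⟩
        · intro j hj
          induction j using Fin.cases with
          | zero => simp at hj
          | succ j' =>
            simp only [List.get_eq_getElem, Fin.val_succ, List.getElem_cons_succ]
            induction j' using Fin.cases with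
            | zero => simpa using hq
            | succ j'' =>
              have := g2 j''.succ (by simp)
              simpa using this
        · intro j hj
          induction j using Fin.cases with
          | zero => simpa using hk
          | succ j' =>
            simp only [List.get_eq_getElem, Fin.val_succ, List.getElem_cons_succ]
            have : (j' : ℕ) + 1 < (q :: L').length := by
              simpa using Nat.lt_of_succ_lt_succ (by simpa using hj)
            have := g3 j' this
            simpa using this
        · rw [hW, g4]
          simp [List.append_assoc]


def runA (i : Bool) (u : Word) : ℕ := (u.takeWhile (· == i)).length
def runB (i : Bool) (u : Word) : ℕ := ((u.drop (runA i u)).takeWhile (· == !i)).length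

lemma take_runA (i : Bool) (u : Word) :
    u.take (runA i u) = List.replicate (runA i u) i := by
  have h2 : u.takeWhile (· == i) = u.take (runA i u) :=
    List.prefix_iff_eq_take.mp (List.takeWhile_prefix _)
  rw [← h2]
  rw [List.eq_replicate_iff]
  exact ⟨rfl, fun b hb => by simpa using List.mem_takeWhile_imp hb⟩

lemma drop_take_runB (i : Bool) (u : Word) :
    (u.drop (runA i u)).take (runB i u) = List.replicate (runB i u) (!i) := by
  have h2 : (u.drop (runA i u)).takeWhile (· == !i)
      = (u.drop (runA i u)).take (runB i u) :=
    List.prefix_iff_eq_take.mp (List.takeWhile_prefix _)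
  rw [← h2]
  rw [List.eq_replicate_iff]
  exact ⟨rfl, fun b hb => by simpa using List.mem_takeWhile_imp hb⟩

lemma dropWhile_head? (p : Bool → Bool) (l : Word) :
    ∀ c ∈ (l.dropWhile p).head?, p c = false := by
  induction l with
  | nil => simp
  | cons a t ih =>
    rw [List.dropWhile_cons]
    by_cases ha : p a
    · simpa [ha] using ih
    · intro c hc
      simp [ha] at hc
      subst hc
      simpa using ha

lemma drop_runA (i : Bool) (u : Word) :
    u.drop (runA i u) = u.dropWhile (· == i) := by
  have h := List.takeWhile_append_dropWhile (p := (· == i)) (l := u)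
  calc u.drop (runA i u)
      = (u.takeWhile (· == i) ++ u.dropWhile (· == i)).drop
          ((u.takeWhile (· == i)).length) := by rw [h]; rfl
    _ = u.dropWhile (· == i) := List.drop_left

lemma drop_runAB (i : Bool) (u : Word) :
    u.drop (runA i u + runB i u) = (u.dropWhile (· == i)).dropWhile (· == !i) := by
  rw [← List.drop_drop, drop_runA]
  have h := List.takeWhile_append_dropWhile (p := (· == !i)) (l := u.dropWhile (· == i))
  have hr : runB i u = ((u.dropWhile (· == i)).takeWhile (· == !i)).length := by
    rw [runB, drop_runA]
  rw [hr]
  calc (u.dropWhile (· == i)).drop (((u.dropWhile (· == i)).takeWhile (· == !i)).length)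
      = (((u.dropWhile (· == i)).takeWhile (· == !i)) ++
          ((u.dropWhile (· == i)).dropWhile (· == !i))).drop
          (((u.dropWhile (· == i)).takeWhile (· == !i)).length) := by rw [h]
    _ = (u.dropWhile (· == i)).dropWhile (· == !i) := List.drop_left

lemma runA_runB_pos (i : Bool) (u : Word) (hu : u ≠ []) : 0 < runA i u + runB i u := by
  cases u with
  | nil => simp at hu
  | cons c t =>
    by_cases hc : c = i
    · have : 0 < runA i (c :: t) := by simp [runA, List.takeWhile_cons, hc]
      omega
    · have h0 : runA i (c :: t) = 0 := by simp [runA, List.takeWhile_cons, hc]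
      have hc' : c = !i := by cases c <;> cases i <;> simp_all
      subst hc'
      have : 0 < runB i ((!i) :: t) := by
        rw [runB, h0]
        simp [List.takeWhile_cons]
      omega

lemma runB_pos (i : Bool) (u : Word) (h : u.drop (runA i u) ≠ []) : 0 < runB i u := by
  rw [drop_runA] at h
  obtain ⟨c, t, hct⟩ := List.exists_cons_of_ne_nil h
  have hh : (c == i) = false := by
    apply dropWhile_head? (· == i) u
    rw [hct]; simp
  have hc : c = !i := by cases c <;> cases i <;> simp_all
  have hr : runB i u = ((u.drop (runA i u)).takeWhile (· == !i)).length := rfl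
  rw [hr, drop_runA, hct, hc]
  simp [List.takeWhile_cons]

lemma rest_head (i : Bool) (u : Word) (h : u.drop (runA i u + runB i u) ≠ []) :
    ∃ t, u.drop (runA i u + runB i u) = i :: t := by
  rw [drop_runAB] at h ⊢
  obtain ⟨c, t, hct⟩ := List.exists_cons_of_ne_nil h
  have hh : (c == !i) = false := by
    apply dropWhile_head? (· == !i) (u.dropWhile (· == i))
    rw [hct]; simp
  have hc : c = i := by cases c <;> cases i <;> simp_all
  exact ⟨t, by rw [hct, hc]⟩

def mkDec (i : Bool) (W u : Word) : List (Word × ℕ) :=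
  if h : u = [] then [([], 0)]
  else if u.drop (runA i u + runB i u) = [] then [(W.take (runA i u), runB i u)]
  else (W.take (runA i u), runB i u) ::
    mkDec i (W.drop (runA i u + runB i u)) (u.drop (runA i u + runB i u))
termination_by u.length
decreasing_by
  have h1 := runA_runB_pos i u h
  have h2 : u.length ≠ 0 := by simpa using h
  rw [List.length_drop]
  omega

lemma split_u (i : Bool) (u : Word) :
    u = List.replicate (runA i u) i ++ (List.replicate (runB i u) (!i)
      ++ u.drop (runA i u + runB i u)) := by
  conv_lhs => rw [← List.take_append_drop (runA i u) u]
  rw [take_runA]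
  congr 1
  conv_lhs => rw [← List.take_append_drop (runB i u) (u.drop (runA i u))]
  rw [drop_take_runB, List.drop_drop]

lemma split_W (a b : ℕ) (W : Word) :
    W = W.take a ++ ((W.drop a).take b ++ W.drop (a + b)) := by
  conv_lhs => rw [← List.take_append_drop a W]
  congr 1
  conv_lhs => rw [← List.take_append_drop b (W.drop a)]
  rw [List.drop_drop]

lemma runA_le (i : Bool) (u : Word) : runA i u ≤ u.length :=
  (List.takeWhile_prefix _).length_le

lemma decWord_cons (i : Bool) (p : Word × ℕ) (L : List (Word × ℕ)) :
    decWord i (p :: L) =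
      (List.replicate p.1.length i ++ List.replicate p.2 (!i)) ++ decWord i L := by
  simp [decWord]

lemma decWord_nil (i : Bool) : decWord i [] = [] := by simp [decWord]

lemma mkDec_cons (i : Bool) (W u : Word) (hu : u ≠ []) :
    ∃ t, mkDec i W u = (W.take (runA i u), runB i u) :: t := by
  rw [mkDec, dif_neg hu]
  by_cases h1 : u.drop (runA i u + runB i u) = []
  · rw [if_pos h1]; exact ⟨[], rfl⟩
  · rw [if_neg h1]; exact ⟨_, rfl⟩

lemma decWord_mkDec (i : Bool) : ∀ (n : ℕ) (u W : Word), u.length ≤ n →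
    W.length = u.length → decWord i (mkDec i W u) = u := by
  intro n
  induction n with
  | zero =>
    intro u W hu hW
    have h0 : u = [] := List.eq_nil_of_length_eq_zero (by omega)
    subst h0
    rw [mkDec]
    simp [decWord]
  | succ n ih =>
    intro u W hu hW
    by_cases h0 : u = []
    · subst h0; rw [mkDec]; simp [decWord]
    · rw [mkDec, dif_neg h0]
      have ha : runA i u ≤ W.length := hW ▸ runA_le i u
      have htl : (W.take (runA i u)).length = runA i u := by
        rw [List.length_take]; omega
      by_cases h1 : u.drop (runA i u + runB i u) = []
      · rw [if_pos h1]
        rw [decWord_cons, decWord_nil, List.append_nil, htl]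
        conv_rhs => rw [split_u i u]
        rw [h1, List.append_nil]
      · rw [if_neg h1]
        rw [decWord_cons, htl]
        have hab := runA_runB_pos i u h0
        have hlu : u.length ≠ 0 := by simpa using h0
        have ih' := ih (u.drop (runA i u + runB i u)) (W.drop (runA i u + runB i u))
          (by rw [List.length_drop]; omega)
          (by rw [List.length_drop, List.length_drop]; omega)
        rw [ih']
        conv_rhs => rw [split_u i u]
        rw [List.append_assoc]

lemma vlen_cons (p : Word × ℕ) (L : List (Word × ℕ)) :
    vlen (p :: L) = p.1.length + vlen L := by simp [vlen]

lemma vlen_mkDec (i : Bool) : ∀ (n : ℕ) (u W : Word), u.length ≤ n →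
    W.length = u.length → vlen (mkDec i W u) = u.count i := by
  intro n
  induction n with
  | zero =>
    intro u W hu hW
    have h0 : u = [] := List.eq_nil_of_length_eq_zero (by omega)
    subst h0
    rw [mkDec]
    simp [vlen]
  | succ n ih =>
    intro u W hu hW
    by_cases h0 : u = []
    · subst h0; rw [mkDec]; simp [vlen]
    · rw [mkDec, dif_neg h0]
      have ha : runA i u ≤ W.length := hW ▸ runA_le i u
      have htl : (W.take (runA i u)).length = runA i u := by
        rw [List.length_take]; omega
      have hrep1 : (List.replicate (runA i u) i).count i = runA i u := by simp
      have hrep2 : (List.replicate (runB i u) (!i)).count i = 0 := by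
        cases i <;> simp [List.count_replicate]
      by_cases h1 : u.drop (runA i u + runB i u) = []
      · rw [if_pos h1]
        rw [vlen_cons, htl]
        conv_rhs => rw [split_u i u]
        rw [h1, List.append_nil, List.count_append, hrep1, hrep2]
        simp [vlen]
      · rw [if_neg h1]
        rw [vlen_cons, htl]
        have hab := runA_runB_pos i u h0
        have hlu : u.length ≠ 0 := by simpa using h0
        have ih' := ih (u.drop (runA i u + runB i u)) (W.drop (runA i u + runB i u))
          (by rw [List.length_drop]; omega)
          (by rw [List.length_drop, List.length_drop]; omega)
        rw [ih']
        conv_rhs => rw [split_u i u]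
        rw [List.count_append, List.count_append, hrep1, hrep2]
        omega

lemma cond_seg (i : Bool) : ∀ (b : ℕ) (l : Word),
    List.Forall₂ (fun w c => c = !i → w = i) l (List.replicate b (!i)) →
    l = List.replicate b i := by
  intro b
  induction b with
  | zero => intro l h; simpa using List.forall₂_nil_right_iff.mp h
  | succ b ihb =>
    intro l h
    rw [List.replicate_succ, List.forall₂_cons_right_iff] at h
    obtain ⟨w, l', hw, hl', rfl⟩ := h
    rw [List.replicate_succ, hw rfl, ihb l' hl']

lemma decAux_mkDec (i : Bool) : ∀ (n : ℕ) (u W : Word), u.length ≤ n →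
    List.Forall₂ (fun w c => c = !i → w = i) W u → DecAux i W (mkDec i W u) := by
  intro n
  induction n with
  | zero =>
    intro u W hu hR
    have h0 : u = [] := List.eq_nil_of_length_eq_zero (by omega)
    subst h0
    have : W = [] := List.forall₂_nil_right_iff.mp hR
    subst this
    rw [mkDec]
    simp [DecAux]
  | succ n ih =>
    intro u W hu hR
    have hW : W.length = u.length := hR.length_eq
    by_cases h0 : u = []
    · subst h0
      rw [mkDec]
      simp only [dif_pos]
      have : W = [] := List.forall₂_nil_right_iff.mp hR
      subst this
      simp [DecAux]
    · rw [mkDec, dif_neg h0]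
      have hab := runA_runB_pos i u h0
      have hlu : u.length ≠ 0 := by simpa using h0
      have hseg : (W.drop (runA i u)).take (runB i u) = List.replicate (runB i u) i := by
        apply cond_seg
        have := List.forall₂_take (runB i u) (List.forall₂_drop (runA i u) hR)
        rwa [drop_take_runB] at this
      have hWsplit : W = W.take (runA i u) ++
          (List.replicate (runB i u) i ++ W.drop (runA i u + runB i u)) := by
        conv_lhs => rw [split_W (runA i u) (runB i u) W]
        rw [hseg]
      by_cases h1 : u.drop (runA i u + runB i u) = []
      · rw [if_pos h1]
        have hWd : W.drop (runA i u + runB i u) = [] := by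
          rw [List.drop_eq_nil_iff, hW]
          exact List.drop_eq_nil_iff.mp h1
        simp only [DecAux]
        rw [hWd, List.append_nil] at hWsplit
        exact hWsplit
      · rw [if_neg h1]
        obtain ⟨t0, hu'⟩ := rest_head i u h1
        have hR' : List.Forall₂ (fun w c => c = !i → w = i)
            (W.drop (runA i u + runB i u)) (u.drop (runA i u + runB i u)) :=
          List.forall₂_drop _ hR
        have hd : DecAux i (W.drop (runA i u + runB i u))
            (mkDec i (W.drop (runA i u + runB i u)) (u.drop (runA i u + runB i u))) := by
          apply ih _ _ (by rw [List.length_drop]; omega) hR'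
        have hne : u.drop (runA i u + runB i u) ≠ [] := h1
        obtain ⟨t, hmk⟩ := mkDec_cons i (W.drop (runA i u + runB i u))
          (u.drop (runA i u + runB i u)) hne
        rw [hmk] at hd ⊢
        have hbpos : 0 < runB i u := by
          apply runB_pos
          intro hcon
          apply h1
          rw [← List.drop_drop, hcon, List.drop_nil]
        have hqV : (W.drop (runA i u + runB i u)).take
            (runA i (u.drop (runA i u + runB i u))) ≠ [] := by
          have hA1 : 0 < runA i (u.drop (runA i u + runB i u)) := by
            rw [hu', runA]
            simp [List.takeWhile_cons]
          have hWd : (W.drop (runA i u + runB i u)).length ≠ 0 := by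
            rw [List.length_drop, hW, ← List.length_drop, hu']
            simp
          intro hcon
          rcases List.take_eq_nil_iff.mp hcon with h | h
          · omega
          · exact hWd (by rw [h]; rfl)
        exact ⟨hbpos, hqV, W.drop (runA i u + runB i u), hWsplit.trans (List.append_assoc _ _ _).symm, hd⟩

lemma takeWhile_rep_append (p : Bool → Bool) (x : Bool) (hp : p x = true) (n : ℕ) (l : Word) :
    (List.replicate n x ++ l).takeWhile p = List.replicate n x ++ l.takeWhile p := by
  induction n with
  | zero => simp
  | succ n ihn => simp [List.replicate_succ, List.takeWhile_cons, hp, ihn]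

lemma takeWhile_not_cons (i : Bool) (t : Word) :
    ((!i) :: t).takeWhile (· == i) = [] := by
  cases i <;> simp [List.takeWhile_cons]

lemma takeWhile_cons_self (i : Bool) (t : Word) :
    (i :: t).takeWhile (· == !i) = [] := by
  cases i <;> simp [List.takeWhile_cons]

lemma runA_rep (i : Bool) (m : ℕ) (l : Word) (hl : l.takeWhile (· == i) = []) :
    runA i (List.replicate m i ++ l) = m := by
  rw [runA, takeWhile_rep_append _ _ (by simp), hl]
  simp

lemma runB_rep (i : Bool) (m kk : ℕ) (l : Word)
    (hl0 : kk = 0 → l.takeWhile (· == i) = [])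
    (hl : l.takeWhile (· == !i) = []) :
    runB i (List.replicate m i ++ (List.replicate kk (!i) ++ l)) = kk := by
  rw [runB, runA_rep i m _ ?_]
  · rw [List.drop_left' (by simp), takeWhile_rep_append _ _ (by simp), hl]
    simp
  · cases kk with
    | zero => simpa using hl0 rfl
    | succ kk => rw [List.replicate_succ, List.cons_append, takeWhile_not_cons]

lemma mkDec_decWord (i : Bool) : ∀ (L : List (Word × ℕ)) (W : Word),
    DecAux i W L → mkDec i W (decWord i L) = L := by
  intro L
  induction L with
  | nil => intro W h; exact absurd h (by simp [DecAux])
  | cons p L ih =>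
    intro W h
    obtain ⟨V, kk⟩ := p
    cases L with
    | nil =>
      simp only [DecAux] at h
      subst h
      rw [decWord_cons, decWord_nil, List.append_nil]
      rcases Nat.eq_zero_or_pos (V.length + kk) with hz | hpos
      · have hV : V = [] := List.eq_nil_of_length_eq_zero (by omega)
        have hk : kk = 0 := by omega
        subst hV hk
        rw [mkDec]
        simp
      · have hA : runA i (List.replicate V.length i ++ List.replicate kk (!i))
            = V.length := by
          apply runA_rep
          cases kk with
          | zero => simp
          | succ kk => rw [List.replicate_succ, takeWhile_not_cons]
        have hB : runB i (List.replicate V.length i ++ List.replicate kk (!i)) = kk := by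
          have := runB_rep i V.length kk [] (fun _ => by simp) (by simp)
          simpa using this
        have hne : List.replicate V.length i ++ List.replicate kk (!i) ≠ [] := by
          apply List.length_pos_iff.mp
          rw [List.length_append, List.length_replicate, List.length_replicate]
          omega
        rw [mkDec, dif_neg hne, hA, hB]
        rw [if_pos (by rw [List.drop_eq_nil_iff]; simp)]
        rw [List.take_left' (by simp)]
    | cons q L' =>
      simp only [DecAux] at h
      obtain ⟨hk, hq, W', hW, hD⟩ := h
      rw [decWord_cons]
      set u' := decWord i (q :: L') with hu'def
      obtain ⟨c, Vt, hc⟩ := List.exists_cons_of_ne_nil hq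
      have hu' : ∃ t0, u' = i :: t0 := by
        rw [hu'def, decWord_cons]
        refine ⟨List.replicate Vt.length i ++ List.replicate q.2 (!i) ++ decWord i L', ?_⟩
        rw [hc]
        simp [List.replicate_succ, List.append_assoc]
      obtain ⟨t0, ht0⟩ := hu'
      show mkDec i W ((List.replicate V.length i ++ List.replicate kk (!i)) ++ u')
          = (V, kk) :: q :: L'
      have hA : runA i ((List.replicate V.length i ++ List.replicate kk (!i)) ++ u')
          = V.length := by
        rw [List.append_assoc]
        apply runA_rep
        cases kk with
        | zero => exact absurd hk (by omega)
        | succ kk =>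
          rw [List.replicate_succ, List.cons_append, takeWhile_not_cons]
      have hB : runB i ((List.replicate V.length i ++ List.replicate kk (!i)) ++ u')
          = kk := by
        rw [List.append_assoc]
        apply runB_rep
        · intro hcon; exact absurd hk (by omega)
        · rw [ht0, takeWhile_cons_self]
      have hne : (List.replicate V.length i ++ List.replicate kk (!i)) ++ u' ≠ [] := by
        intro hcon
        have := congrArg List.length hcon
        rw [ht0] at this
        simp at this
      have hdrop : ((List.replicate V.length i ++ List.replicate kk (!i)) ++ u').drop
          (V.length + kk) = u' := List.drop_left' (by simp)
      rw [mkDec, dif_neg hne, hA, hB, hdrop, if_neg (by rw [ht0]; simp)]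
      have hWtake : W.take V.length = V := by
        rw [hW, List.append_assoc]
        exact List.take_left' rfl
      have hWdrop : W.drop (V.length + kk) = W' := by
        rw [hW]
        exact List.drop_left' (by simp)
      rw [hWtake, hWdrop, ih W' hD]

lemma forall₂_left_rep (i : Bool) (V : Word) :
    List.Forall₂ (fun w c => c = !i → w = i) V (List.replicate V.length i) := by
  induction V with
  | nil => exact List.Forall₂.nil
  | cons c t ih =>
    rw [List.length_cons, List.replicate_succ]
    exact List.Forall₂.cons (fun h => absurd h.symm (by simp)) ih

lemma forall₂_rep_rep (i : Bool) (kk : ℕ) :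
    List.Forall₂ (fun w c => c = !i → w = i) (List.replicate kk i)
      (List.replicate kk (!i)) := by
  induction kk with
  | zero => exact List.Forall₂.nil
  | succ kk ih =>
    rw [List.replicate_succ, List.replicate_succ]
    exact List.Forall₂.cons (fun _ => rfl) ih

lemma forall₂_decWord (i : Bool) : ∀ (L : List (Word × ℕ)) (W : Word),
    DecAux i W L →
    List.Forall₂ (fun w c => c = !i → w = i) W (decWord i L) := by
  intro L
  induction L with
  | nil => intro W h; exact absurd h (by simp [DecAux])
  | cons p L ih =>
    intro W h
    obtain ⟨V, kk⟩ := p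
    cases L with
    | nil =>
      simp only [DecAux] at h
      subst h
      rw [decWord_cons, decWord_nil, List.append_nil]
      exact List.rel_append (forall₂_left_rep i V) (forall₂_rep_rep i kk)
    | cons q L' =>
      simp only [DecAux] at h
      obtain ⟨hk, hq, W', hW, hD⟩ := h
      rw [decWord_cons, hW, List.append_assoc, List.append_assoc]
      exact List.rel_append (forall₂_left_rep i V)
        (List.rel_append (forall₂_rep_rep i kk) (ih W' hD))


def sGen {k : Type*} [Ring k] (i : Bool) : Bool → Bool → k :=
  fun c b => if c = i then -1 else if b = i then 1 else 0

lemma count_ofFn (n : ℕ) (v : Fin n → Bool) (a : Bool) :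
    (List.ofFn v).count a = (Finset.univ.filter fun j => v j = a).card := by
  induction n with
  | zero => simp
  | succ n ihn =>
    rw [List.ofFn_succ, List.count_cons, ihn (fun j => v j.succ)]
    rw [Finset.card_filter, Finset.card_filter, Fin.sum_univ_succ]
    simp only [beq_iff_eq]
    omega

lemma prod_neg_one_filter {k : Type*} [CommRing k] {ι : Type*} (s : Finset ι)
    (p : ι → Prop) [DecidablePred p] :
    (∏ j ∈ s, (if p j then (-1 : k) else 1)) = (-1 : k) ^ (s.filter p).card := by
  rw [Finset.prod_ite, Finset.prod_const, Finset.prod_const, one_pow, mul_one]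

lemma subCoeff_sGen {k : Type*} [Field k] (i : Bool) (Z : Word → k) (W : Word) :
    (∑ᶠ L ∈ {L : List (Word × ℕ) | IsDec i W L},
      (-1 : k) ^ vlen L * Z (decWord i L)) = subCoeff (sGen i) Z W := by
  classical
  set n := W.length with hn
  set T' : Finset (Fin n → Bool) :=
    Finset.univ.filter (fun v => ∀ j, v j = !i → W.get j = i) with hT'
  have hmem : ∀ v, v ∈ T' ↔ ∀ j, v j = !i → W.get j = i := by
    intro v; simp [hT']
  -- Forall₂ characterization for v ∈ T'
  have hofn : ∀ v : Fin n → Bool, (List.ofFn v).length = W.length := by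
    intro v; simp [hn]
  have hforall : ∀ v : Fin n → Bool, v ∈ T' →
      List.Forall₂ (fun w c => c = !i → w = i) W (List.ofFn v) := by
    intro v hv
    rw [List.forall₂_iff_get]
    refine ⟨(hofn v).symm, ?_⟩
    intro j h₁ h₂
    rw [List.get_ofFn]
    exact fun hc => (hmem v).mp hv _ hc
  -- the set of decompositions is the image of T'
  have hset : {L : List (Word × ℕ) | IsDec i W L}
      = ↑(T'.image (fun v => mkDec i W (List.ofFn v))) := by
    ext L
    simp only [Set.mem_setOf_eq, Finset.coe_image, Set.mem_image, Finset.mem_coe]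
    constructor
    · intro hL
      rw [isDec_iff_decAux] at hL
      have hF := forall₂_decWord i L W hL
      have hlen : W.length = (decWord i L).length := hF.length_eq
      refine ⟨fun j => (decWord i L).get (Fin.cast (by rw [← hlen]) j), ?_, ?_⟩
      · rw [hmem]
        intro j hc
        obtain ⟨-, hget⟩ := List.forall₂_iff_get.mp hF
        exact hget j j.isLt (by omega) hc
      · have hofn2 : List.ofFn (fun j => (decWord i L).get (Fin.cast (by rw [← hlen]) j))
            = decWord i L := by
          apply List.ext_get (by simp [hn, hlen])
          intro j h₁ h₂
          rw [List.get_ofFn]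
          congr 1
        rw [hofn2]
        exact mkDec_decWord i L W hL
    · rintro ⟨v, hv, rfl⟩
      rw [isDec_iff_decAux]
      exact decAux_mkDec i (List.ofFn v).length (List.ofFn v) W le_rfl (hforall v hv)
  rw [hset, finsum_mem_coe_finset]
  rw [Finset.sum_image ?inj]
  case inj =>
    intro v hv v' hv' heq
    have h1 := decWord_mkDec i (List.ofFn v).length (List.ofFn v) W le_rfl (hofn v).symm
    have h2 := decWord_mkDec i (List.ofFn v').length (List.ofFn v') W le_rfl (hofn v').symm
    rw [show mkDec i W (List.ofFn v) = mkDec i W (List.ofFn v') from heq] at h1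
    exact List.ofFn_injective (h1.symm.trans h2)
  -- now rewrite each term and compare with subCoeff
  rw [subCoeff]
  rw [← Finset.sum_filter_add_sum_filter_not Finset.univ
    (fun v => ∀ j, v j = !i → W.get j = i)
    (fun v => Z (List.ofFn v) * ∏ j : Fin W.length, sGen i (v j) (W.get j))]
  have hzero : ∀ v ∈ Finset.univ.filter
      (fun v : Fin n → Bool => ¬ ∀ j, v j = !i → W.get j = i),
      Z (List.ofFn v) * ∏ j : Fin W.length, sGen i (v j) (W.get j) = 0 := by
    intro v hv
    simp only [Finset.mem_filter, Finset.mem_univ, true_and, not_forall] at hv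
    obtain ⟨j, hj1, hj2⟩ := hv
    have : sGen (k := k) i (v j) (W.get j) = 0 := by
      rw [sGen]
      rw [if_neg (by rw [hj1]; cases i <;> simp), if_neg hj2]
    rw [Finset.prod_eq_zero (Finset.mem_univ j) this, mul_zero]
  rw [Finset.sum_eq_zero hzero, add_zero]
  apply Finset.sum_congr rfl
  intro v hv
  rw [decWord_mkDec i (List.ofFn v).length (List.ofFn v) W le_rfl (hofn v).symm,
    vlen_mkDec i (List.ofFn v).length (List.ofFn v) W le_rfl (hofn v).symm]
  rw [count_ofFn]
  have hprod : (∏ j : Fin W.length, sGen i (v j) (W.get j))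
      = ∏ j : Fin W.length, (if v j = i then (-1 : k) else 1) := by
    apply Finset.prod_congr rfl
    intro j _
    rw [sGen]
    by_cases hj : v j = i
    · rw [if_pos hj, if_pos hj]
    · have hj' : v j = !i := Bool.eq_not_iff.mpr hj
      rw [if_neg hj, if_neg hj, if_pos ((hmem v).mp hv j hj')]
  rw [hprod, prod_neg_one_filter]
  ring

lemma subCoeff_nil {α : Type*} {k : Type*} [CommSemiring k] (s : Bool → α → k)
    (Z : Word → k) : subCoeff s Z [] = Z [] := by
  simp [subCoeff]

lemma convL_cons_nil {α : Type*} {k : Type*} [Semiring k] (F : List α → k)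
    (Fs : List (List α → k)) : convL (F :: Fs) [] = F [] * convL Fs [] := by
  simp [convL]


/-- Theorem `rel2coef`.  The hexagon relation
`e^{(μ/2)X₀}·Φ(X_∞,X₀)·e^{(μ/2)X_∞}·Φ(X₁,X_∞)·e^{(μ/2)X₁}·Φ(X₀,X₁) = 1` holds in
`k⟪X₀,X₁⟫` if and only if, for every nonempty word `W`, the sum over all factorizations
`W = W₁W₂W₃W₄W₅W₆` of the product of the six corresponding closed-form coefficients
vanishes. -/
theorem statement2 {k : Type*} [Field k] [CharZero k] (μ : k) (Z : Word → k)
    (hZ : Z [] = 1) :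
    convL [expC (halfX0 μ), subCoeff sInf0 Z, expC (halfXinf μ), subCoeff s1Inf Z,
        expC (halfX1 μ), Z] = deltaOne ↔
      ∀ W : Word, W ≠ [] →
        convL [hexA μ, hexB Z, hexC μ, hexD Z, hexE μ, Z] W = 0 := by
  have e2 : subCoeff sInf0 Z = hexB Z := by
    funext W
    have hs : (sInf0 : Bool → Bool → k) = sGen false := by
      funext c b; cases c <;> cases b <;> simp [sInf0, sGen]
    rw [hs]
    exact (subCoeff_sGen false Z W).symm
  have e4 : subCoeff s1Inf Z = hexD Z := by
    funext W
    have hs : (s1Inf : Bool → Bool → k) = sGen true := by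
      funext c b; cases c <;> cases b <;> simp [s1Inf, sGen]
    rw [hs]
    exact (subCoeff_sGen true Z W).symm
  rw [expC_halfX0, expC_halfXinf, expC_halfX1, e2, e4]
  constructor
  · intro h W hW
    rw [h]
    cases W with
    | nil => exact absurd rfl hW
    | cons a T => rfl
  · intro h
    funext W
    cases W with
    | nil =>
      show convL _ [] = (1 : k)
      rw [convL_cons_nil, convL_cons_nil, convL_cons_nil, convL_cons_nil, convL_cons_nil]
      have hA : hexA μ ([] : Word) = 1 := by simp [hexA]
      have hB : hexB Z ([] : Word) = 1 := by rw [← e2, subCoeff_nil, hZ]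
      have hC : hexC μ ([] : Word) = 1 := by simp [hexC]
      have hD : hexD Z ([] : Word) = 1 := by rw [← e4, subCoeff_nil, hZ]
      have hE : hexE μ ([] : Word) = 1 := by simp [hexE]
      rw [hA, hB, hC, hD, hE, convL_cons_nil, hZ]
      simp [convL, deltaOne]
    | cons a T => exact h _ (by simp)
end

section
/- Let k be a field of characteristic 0 and let z be a function from words in {X₀,X₁} to k with z(∅) = 1 such that z is a shuffle character (the shuffle relations) and z satisfies the duality relations z(W) = z(←θ(W)) for all words W. Then z satisfies the 2-cycle family of relations: for every nonempty word W, Σ_{U₁U₂=W} (−1)^{|U₂|}·z(U₁)·z(θ(U₂)) = 0. -/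
open scoped BigOperators

/-- All shuffles (interleavings) of two words, with multiplicity. -/
def shuffles {α : Type*} : List α → List α → List (List α)
  | [], V => [V]
  | U, [] => [U]
  | a :: U, b :: V =>
      ((shuffles U (b :: V)).map (a :: ·)) ++ ((shuffles (a :: U) V).map (b :: ·))
termination_by U V => U.length + V.length
decreasing_by all_goals simp

section Aux

theorem shuffles_nil_left {α : Type*} (V : List α) : shuffles [] V = [V] := by
  rw [shuffles]

theorem shuffles_nil_right {α : Type*} (U : List α) : shuffles U [] = [U] := by
  cases U <;> simp [shuffles]

theorem shuffles_cons_cons {α : Type*} (a b : α) (U V : List α) :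
    shuffles (a :: U) (b :: V) =
      ((shuffles U (b :: V)).map (a :: ·)) ++ ((shuffles (a :: U) V).map (b :: ·)) := by
  rw [shuffles]

variable {k : Type*} [CommRing k]

/-- Sum of `f` over the shuffles of `U` and `V`. -/
def gsum (f : Word → k) (U V : Word) : k := ((shuffles U V).map f).sum

theorem gsum_nil_left (f : Word → k) (V : Word) : gsum f [] V = f V := by
  simp [gsum, shuffles_nil_left]

theorem gsum_nil_right (f : Word → k) (U : Word) : gsum f U [] = f U := by
  simp [gsum, shuffles_nil_right]

theorem gsum_cons_cons (f : Word → k) (a b : Bool) (U V : Word) :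
    gsum f (a :: U) (b :: V) =
      gsum (fun w => f (a :: w)) U (b :: V) + gsum (fun w => f (b :: w)) (a :: U) V := by
  simp [gsum, shuffles_cons_cons, List.map_map, Function.comp_def]

/-- The key combinatorial "antipode" identity. -/
theorem key_antipode : ∀ n : ℕ, ∀ W : Word, W.length = n → W ≠ [] → ∀ f : Word → k,
    ∑ i ∈ Finset.range (W.length + 1),
      (-1 : k) ^ (W.drop i).length * gsum f (W.take i) ((W.drop i).reverse) = 0 := by
  intro n
  induction n using Nat.strong_induction_on with
  | _ n ih =>
  intro W hlen hne f
  obtain ⟨a, T, rfl⟩ : ∃ a T, W = a :: T := by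
    cases W with
    | nil => exact absurd rfl hne
    | cons a T => exact ⟨a, T, rfl⟩
  rcases T.eq_nil_or_concat with rfl | ⟨T', c, rfl⟩
  · -- W = [a]
    simp [Finset.sum_range_succ, gsum_nil_left, gsum_nil_right]
  · -- W = a :: T' ++ [c]
    simp only [List.concat_eq_append] at hlen hne ⊢
    set T : Word := T' ++ [c] with hT
    have hmT : T.length = T'.length + 1 := by simp [hT]
    have hWlen : (a :: T).length = T.length + 1 := by simp
    have hn : n = T.length + 1 := by
      rw [← hlen]; simp
    have hmlt : T.length < n := by omega
    -- peel off the i = 0 term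
    rw [hWlen, Finset.sum_range_succ']
    -- peel off the i = T.length + 1 term
    rw [Finset.sum_range_succ]
    have hsplit : ∀ j ∈ Finset.range T.length,
        (-1 : k) ^ ((a :: T).drop (j + 1)).length *
            gsum f ((a :: T).take (j + 1)) (((a :: T).drop (j + 1)).reverse) =
          (-1 : k) ^ (T.drop j).length *
              gsum (fun w => f (a :: w)) (T.take j) ((T.drop j).reverse) +
          (-1 : k) ^ (T.drop j).length *
              gsum (fun w => f (c :: w)) ((a :: T').take (j + 1))
                (((a :: T').drop (j + 1)).reverse) := by
      intro j hj
      rw [Finset.mem_range] at hj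
      have hjle : j ≤ T'.length := by omega
      have hdropT : T.drop j = T'.drop j ++ [c] := by
        rw [hT, List.drop_append_of_le_length hjle]
      have htakeT : T.take j = T'.take j := by
        rw [hT, List.take_append_of_le_length hjle]
      rw [List.drop_succ_cons, List.take_succ_cons, hdropT, htakeT]
      rw [show (T'.drop j ++ [c]).reverse = c :: (T'.drop j).reverse by simp]
      rw [gsum_cons_cons, mul_add]
      simp only [List.drop_succ_cons, List.take_succ_cons, List.length_cons,
        List.length_append, List.length_reverse]
    rw [Finset.sum_congr rfl hsplit, Finset.sum_add_distrib]
    -- first sum: apply IH to T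
    have hIH1 := ih T.length hmlt T rfl (by simp [hT]) (fun w => f (a :: w))
    rw [Finset.sum_range_succ] at hIH1
    simp only [List.drop_length, List.take_length, List.length_nil, List.reverse_nil,
      pow_zero, one_mul, gsum_nil_right] at hIH1
    have hA : ∑ j ∈ Finset.range T.length,
        (-1 : k) ^ (T.drop j).length *
          gsum (fun w => f (a :: w)) (T.take j) ((T.drop j).reverse) = -f (a :: T) := by
      linear_combination hIH1
    -- second sum: apply IH to a :: T'
    have hlen2 : (a :: T').length = T.length := by simp [hT]
    have hIH2 := ih T.length hmlt (a :: T') hlen2 (by simp) (fun w => f (c :: w))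
    rw [hlen2, Finset.sum_range_succ'] at hIH2
    simp only [List.drop_zero, List.take_zero, gsum_nil_left] at hIH2
    have hexp : ∀ j ∈ Finset.range T.length,
        (-1 : k) ^ (T.drop j).length *
            gsum (fun w => f (c :: w)) ((a :: T').take (j + 1))
              (((a :: T').drop (j + 1)).reverse) =
          -((-1 : k) ^ ((a :: T').drop (j + 1)).length *
            gsum (fun w => f (c :: w)) ((a :: T').take (j + 1))
              (((a :: T').drop (j + 1)).reverse)) := by
      intro j hj
      rw [Finset.mem_range] at hj
      have h1 : (T.drop j).length = ((a :: T').drop (j + 1)).length + 1 := by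
        simp only [List.length_drop, List.length_cons, hmT]
        omega
      rw [h1, pow_succ]
      ring
    rw [Finset.sum_congr rfl hexp, Finset.sum_neg_distrib]
    have hB : ∑ j ∈ Finset.range T.length,
        (-1 : k) ^ ((a :: T').drop (j + 1)).length *
          gsum (fun w => f (c :: w)) ((a :: T').take (j + 1))
            (((a :: T').drop (j + 1)).reverse) =
        -((-1 : k) ^ (a :: T').length * f (c :: (a :: T').reverse)) := by
      linear_combination hIH2
    rw [hA, hB]
    have hrev : (c :: (a :: T').reverse) = (a :: T).reverse := by simp [hT]
    have hfin1 : (a :: T).drop (T.length + 1) = [] := by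
      apply List.drop_eq_nil_of_le
      simp
    have hfin2 : (a :: T).take (T.length + 1) = a :: T := by
      apply List.take_of_length_le
      simp
    rw [hfin1, hfin2, List.reverse_nil, gsum_nil_right, hrev]
    simp only [List.drop_zero, List.take_zero, gsum_nil_left, List.length_nil, pow_zero,
      one_mul, List.length_cons, hmT]
    simp only [pow_succ]
    ring

theorem theta_theta (W : Word) : theta (theta W) = W := by
  simp [theta, List.map_map, Function.comp_def, Bool.not_not]

end Aux

/-- If `z` is a shuffle character with `z(∅) = 1` satisfying the
duality relations `z(W) = z(←θ(W))`, then for every nonempty word `W`,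
`Σ_{U₁U₂ = W} (−1)^{|U₂|}·z(U₁)·z(θ(U₂)) = 0`. -/
theorem statement14 {k : Type*} [Field k] [CharZero k] (z : Word → k) (hz1 : z [] = 1)
    (hsh : ∀ U V : Word, ((shuffles U V).map z).sum = z U * z V)
    (hdual : ∀ W : Word, z W = z ((theta W).reverse)) :
    ∀ W : Word, W ≠ [] →
      ∑ i ∈ Finset.range (W.length + 1),
        (-1 : k) ^ (W.drop i).length * z (W.take i) * z (theta (W.drop i)) = 0 := by
  intro W hne
  have hkey := key_antipode W.length W rfl hne z
  rw [← hkey]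
  apply Finset.sum_congr rfl
  intro i _
  have hd : z (theta (W.drop i)) = z ((W.drop i).reverse) := by
    rw [hdual (theta (W.drop i)), theta_theta]
  rw [hd, mul_assoc, ← hsh]
  rfl
end
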